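/- Let (X,d) be a compact metric space and f: X → X a homeomorphism that possesses a wandering point, i.e. a point x admitting an open neighborhood U such that f^k(U) ∩ U = ∅ for all k ≥ 1. Then h_pol(f) ≥ 1. -/

import Mathlib

/-!
Points of a backward orbit `x, f⁻¹ x, …, f⁻⁽ⁿ⁻¹⁾ x` of a wandering point are pairwise
`ε`-separated for `d_n^f`, where `B(x, ε) ⊆ U`: at time `j` the points `f⁻ⁱ x` and `f⁻ʲ x`
(`i < j`) are sent to `f^(j-i) x ∉ U` and to `x`. Hence `G_n^f(ε/3) ≥ n`, so
`log G_n^f(ε/3) / log n ≥ 1`.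
-/

open Filter Metric Set

variable {Z : Type*} [MetricSpace Z]

/-- The dynamical metric `d_n^f(x,y) = max_{0 ≤ k ≤ n-1} d(f^k x, f^k y)`. -/
noncomputable def dynDist (f : Z → Z) (n : ℕ) (x y : Z) : ℝ :=
  ((Finset.range n).sup fun k => nndist (f^[k] x) (f^[k] y) : NNReal)

/-- `G_n^f(Y,ε)`: the minimal number of balls of radius `ε` for the metric `d_n^f`
needed to cover `Y`. -/
noncomputable def coverNum (f : Z → Z) (n : ℕ) (Y : Set Z) (ε : ℝ) : ℕ :=
  sInf {m : ℕ | ∃ s : Finset Z, s.card = m ∧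
    Y ⊆ ⋃ c ∈ s, {y : Z | dynDist f n c y ≤ ε}}

/-- The polynomial entropy of `f` on `Y`:
`h_pol(f,Y) = lim_{ε→0} limsup_{n→∞} log G_n^f(Y,ε) / log n`
(realized, by antitonicity in `ε`, as the supremum over `ε > 0`). -/
noncomputable def hpolOn (f : Z → Z) (Y : Set Z) : EReal :=
  ⨆ ε : {e : ℝ // 0 < e}, Filter.atTop.limsup
    (fun n : ℕ => ((Real.log (coverNum f n Y ε.1) / Real.log n : ℝ) : EReal))

/-- The polynomial entropy of `f`. -/
noncomputable def hpol (f : Z → Z) : EReal := hpolOn f Set.univ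

section DynDist

variable (f : Z → Z) (n : ℕ)

lemma dist_iterate_le_dynDist {k : ℕ} (hk : k < n) (a b : Z) :
    dist (f^[k] a) (f^[k] b) ≤ dynDist f n a b := by
  rw [dist_nndist, dynDist, NNReal.coe_le_coe]
  exact Finset.le_sup (f := fun k => nndist (f^[k] a) (f^[k] b)) (Finset.mem_range.2 hk)

lemma dynDist_comm (a b : Z) : dynDist f n a b = dynDist f n b a := by
  simp only [dynDist, nndist_comm]

lemma dynDist_triangle (a b c : Z) :
    dynDist f n a c ≤ dynDist f n a b + dynDist f n b c := by
  rw [dynDist, dynDist, dynDist, ← NNReal.coe_add, NNReal.coe_le_coe]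
  exact Finset.sup_le fun k hk => (nndist_triangle _ _ _).trans <|
    add_le_add (Finset.le_sup (f := fun k => nndist (f^[k] a) (f^[k] b)) hk)
      (Finset.le_sup (f := fun k => nndist (f^[k] b) (f^[k] c)) hk)

lemma dynDist_self (a : Z) : dynDist f n a a = 0 := by
  simp [dynDist]

variable {f}

lemma continuous_dynDist (hf : Continuous f) (c : Z) : Continuous (dynDist f n c) :=
  NNReal.continuous_coe.comp <| Continuous.finset_sup_apply fun k _ =>
    continuous_const.nndist (hf.iterate k)

end DynDist

section CoverNum

open Topology

variable {f : Z → Z} {n : ℕ} {Y : Set Z} {ε : ℝ}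

lemma exists_finset_card_eq_coverNum (hf : Continuous f) (hY : IsCompact Y) (hε : 0 < ε) :
    ∃ s : Finset Z, s.card = coverNum f n Y ε ∧
      Y ⊆ ⋃ c ∈ s, {y : Z | dynDist f n c y ≤ ε} := by
  have hnhds : ∀ c, {y : Z | dynDist f n c y ≤ ε} ∈ 𝓝 c := fun c =>
    (continuous_dynDist n hf c).tendsto c (ge_mem_nhds (by rwa [dynDist_self]))
  obtain ⟨s, -, hs⟩ := hY.elim_nhds_subcover _ fun c _ => hnhds c
  exact Nat.sInf_mem (s := {m | ∃ s : Finset Z, s.card = m ∧ _}) ⟨s.card, s, rfl, hs⟩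

/-- A family of `2ε`-separated points of `Y` needs distinct centres in any `ε`-cover. -/
lemma card_le_coverNum_of_separated (hf : Continuous f) (hY : IsCompact Y) (hε : 0 < ε)
    {ι : Type*} [Fintype ι] (z : ι → Z) (hzY : ∀ i, z i ∈ Y)
    (hz : Pairwise fun i j => 2 * ε < dynDist f n (z i) (z j)) :
    Fintype.card ι ≤ coverNum f n Y ε := by
  obtain ⟨s, hcard, hcover⟩ := exists_finset_card_eq_coverNum (n := n) hf hY hε
  have hcentre : ∀ i, ∃ c ∈ s, dynDist f n c (z i) ≤ ε := fun i => by
    simpa using hcover (hzY i)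
  choose g hgs hg using hcentre
  rw [← hcard, ← Finset.card_univ]
  refine Finset.card_le_card_of_injOn g (fun i _ => hgs i) fun i _ j _ hij => ?_
  by_contra hne
  have := calc dynDist f n (z i) (z j)
      ≤ dynDist f n (z i) (g i) + dynDist f n (g i) (z j) := dynDist_triangle f n _ _ _
    _ ≤ ε + ε := by rw [dynDist_comm f n (z i)]; exact add_le_add (hg i) (hij ▸ hg j)
  linarith [hz hne]

lemma one_le_hpolOn_of_le_coverNum (hε : 0 < ε)
    (h : ∀ᶠ n : ℕ in atTop, (n : ℝ) ≤ coverNum f n Y ε) : 1 ≤ hpolOn f Y := by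
  refine le_iSup_of_le ⟨ε, hε⟩ (le_limsup_of_frequently_le' ?_)
  refine (h.and (eventually_ge_atTop 2)).frequently.mono fun n ⟨hn, hn2⟩ => ?_
  have hlog : 0 < Real.log n := Real.log_pos (by exact_mod_cast hn2)
  exact_mod_cast (one_le_div hlog).2 (Real.log_le_log (by positivity) hn)

end CoverNum

lemma le_dynDist_iterate_of_not_return {f g : Z → Z}
    (hfg : Function.LeftInverse f g) {x : Z} {ε : ℝ}
    (hreturn : ∀ k, 1 ≤ k → ε ≤ dist (f^[k] x) x) {n i j : ℕ} (hij : i < j) (hj : j < n) :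
    ε ≤ dynDist f n (g^[i] x) (g^[j] x) := by
  have hfg_iter : ∀ m, f^[m] (g^[m] x) = x := fun m => (hfg.iterate m) x
  have hi : f^[j] (g^[i] x) = f^[j - i] x := by
    rw [← Nat.sub_add_cancel hij.le, Function.iterate_add_apply, hfg_iter, Nat.add_sub_cancel]
  calc ε ≤ dist (f^[j - i] x) x := hreturn _ (by omega)
    _ = dist (f^[j] (g^[i] x)) (f^[j] (g^[j] x)) := by rw [hi, hfg_iter]
    _ ≤ _ := dist_iterate_le_dynDist f n hj _ _

/-- **Proposition (wandering point forces `h_pol ≥ 1`).**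
A homeomorphism of a compact metric space possessing a wandering point
(a point with an open neighborhood `U` such that `f^k(U) ∩ U = ∅` for all `k ≥ 1`)
has polynomial entropy at least 1. -/
theorem one_le_hpol_of_wandering {X : Type*} [MetricSpace X] [CompactSpace X]
    (f : X ≃ₜ X) (x : X) (U : Set X) (hU : IsOpen U) (hxU : x ∈ U)
    (hwand : ∀ k : ℕ, 1 ≤ k → (⇑f)^[k] '' U ∩ U = ∅) :
    (1 : EReal) ≤ hpol (⇑f) := by
  obtain ⟨ε, hε, hball⟩ := Metric.isOpen_iff.mp hU x hxU
  have hreturn : ∀ k, 1 ≤ k → ε ≤ dist ((⇑f)^[k] x) x := fun k hk =>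
    not_lt.1 fun h => (hwand k hk).le ⟨⟨x, hxU, rfl⟩, hball (mem_ball.2 h)⟩
  have hsep : ∀ n, Pairwise fun i j : Fin n =>
      2 * (ε / 3) < dynDist f n ((⇑f.symm)^[i] x) ((⇑f.symm)^[j] x) := by
    intro n i j hij
    have h := fun {i j : Fin n} (h : (i : ℕ) < j) =>
      le_dynDist_iterate_of_not_return f.apply_symm_apply hreturn h j.isLt
    rcases Fin.lt_or_lt_of_ne hij with hlt | hlt
    · linarith [h hlt]
    · linarith [h hlt, dynDist_comm f n ((⇑f.symm)^[i] x) ((⇑f.symm)^[j] x)]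
  refine one_le_hpolOn_of_le_coverNum (ε := ε / 3) (by positivity) (.of_forall fun n => ?_)
  have := card_le_coverNum_of_separated f.continuous isCompact_univ (by positivity)
    (fun i : Fin n => (⇑f.symm)^[i] x) (fun _ => mem_univ _) (hsep n)
  exact_mod_cast (Fintype.card_fin n).symm.trans_le this
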